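/- Let g be holomorphic on the punctured unit disk Δ* and suppose that |g(z)|² = |z|^γ · u(z) on Δ*, where γ is a real number with −2 < γ < 2 and u is a continuous nowhere-vanishing function on the full disk Δ. Then γ ≥ 0 and g extends holomorphically to Δ. -/
import Mathlib


open Metric Set Filter Asymptotics Topology

/-- If `g` is holomorphic on the punctured unit disk and `‖g z‖² = ‖z‖^γ · u z` with
`-2 < γ < 2` and `u` continuous and nowhere vanishing on the full disk, then `γ ≥ 0`
and `g` extends holomorphically to the disk. -/
theorem transition_function_extends (g : ℂ → ℂ) (γ : ℝ) (u : ℂ → ℝ)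
    (hγ1 : -2 < γ) (hγ2 : γ < 2)
    (hg : DifferentiableOn ℂ g (ball (0 : ℂ) 1 \ {0}))
    (hu : ContinuousOn u (ball (0 : ℂ) 1))
    (hu0 : ∀ z ∈ ball (0 : ℂ) 1, u z ≠ 0)
    (heq : ∀ z ∈ ball (0 : ℂ) 1 \ {0}, ‖g z‖ ^ 2 = ‖z‖ ^ γ * u z) :
    0 ≤ γ ∧ ∃ G : ℂ → ℂ, DifferentiableOn ℂ G (ball (0 : ℂ) 1) ∧
      EqOn G g (ball (0 : ℂ) 1 \ {0}) := by
  have hs : ball (0 : ℂ) 1 ∈ 𝓝 0 := ball_mem_nhds _ one_pos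
  have hl : 𝓝[ball (0 : ℂ) 1 \ {0}] (0 : ℂ) = 𝓝[≠] 0 := by
    rw [diff_eq, inter_comm]
    exact nhdsWithin_inter_of_mem' (mem_nhdsWithin_of_mem_nhds hs)
  -- positivity of u on the punctured disk
  have upos : ∀ z ∈ ball (0 : ℂ) 1 \ {0}, 0 < u z := by
    intro z hz
    have hz0 : z ≠ 0 := hz.2
    have ht : (0 : ℝ) < ‖z‖ := norm_pos_iff.2 hz0
    have hrp : (0 : ℝ) < ‖z‖ ^ γ := Real.rpow_pos_of_pos ht γ
    have h1 := heq z hz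
    have h2 : (0 : ℝ) ≤ ‖g z‖ ^ 2 := sq_nonneg _
    have : 0 ≤ u z := by nlinarith
    exact lt_of_le_of_ne this (Ne.symm (hu0 z hz.1))
  -- u 0 > 0
  have u0pos : 0 < u 0 := by
    have hne : (𝓝[ball (0 : ℂ) 1 \ {0}] (0 : ℂ)).NeBot := by
      rw [hl]; infer_instance
    have htd : Tendsto u (𝓝[ball (0 : ℂ) 1 \ {0}] 0) (𝓝 (u 0)) :=
      ((hu 0 (mem_ball_self one_pos)).mono diff_subset)
    haveI := hne
    have h0 : 0 ≤ u 0 := ge_of_tendsto htd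
      (eventually_nhdsWithin_of_forall fun z hz => (upos z hz).le)
    exact lt_of_le_of_ne h0 (Ne.symm (hu0 0 (mem_ball_self one_pos)))
  -- local upper bound for u near 0
  set M : ℝ := u 0 + 1 with hM
  have hMev : ∀ᶠ z in 𝓝 (0 : ℂ), z ∈ ball (0 : ℂ) 1 ∧ u z < M := by
    have h1 : ∀ᶠ z in 𝓝 (0 : ℂ), u z < M := by
      have := (hu 0 (mem_ball_self one_pos))
      rw [ContinuousWithinAt, nhdsWithin_eq_nhds.2 hs] at this
      exact this.eventually (Filter.Tendsto.eventually_lt_const (by simp [hM]) tendsto_id)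
    have hsev : ∀ᶠ z in 𝓝 (0 : ℂ), z ∈ ball (0 : ℂ) 1 := hs
    exact hsev.and h1
  -- little-o estimate for the removable singularity theorem
  have ho : (fun z : ℂ => g z - g 0) =o[𝓝[≠] (0 : ℂ)] fun z => (z - 0)⁻¹ := by
    simp only [sub_zero]
    have hog : (fun z : ℂ => g z) =o[𝓝[≠] (0 : ℂ)] fun z => z⁻¹ := by
      rw [isLittleO_iff]
      intro c hc
      have hnt : Tendsto (fun z : ℂ => ‖z‖) (𝓝 0) (𝓝 0) := by
        simpa using continuous_norm.tendsto (0 : ℂ)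
      have hrt : Tendsto (fun z : ℂ => M * ‖z‖ ^ (γ + 2)) (𝓝 0) (𝓝 0) := by
        have h := (Real.continuousAt_rpow_const 0 (γ + 2) (Or.inr (by linarith))).tendsto.comp hnt
        have h' : Tendsto (fun z : ℂ => ‖z‖ ^ (γ + 2)) (𝓝 0) (𝓝 0) := by
          simpa [Function.comp_def, Real.zero_rpow (by linarith : γ + 2 ≠ 0)] using h
        simpa using tendsto_const_nhds.mul h'
      have hev : ∀ᶠ z in 𝓝 (0 : ℂ), M * ‖z‖ ^ (γ + 2) < c ^ 2 :=
        hrt.eventually (Filter.Tendsto.eventually_lt_const (by positivity) tendsto_id)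
      filter_upwards [nhdsWithin_le_nhds (hMev.and hev), self_mem_nhdsWithin] with z hz hz0
      obtain ⟨⟨hzb, hzM⟩, hzc⟩ := hz
      have hz0' : z ≠ 0 := hz0
      have ht : (0 : ℝ) < ‖z‖ := norm_pos_iff.2 hz0'
      have hrp : (0 : ℝ) < ‖z‖ ^ γ := Real.rpow_pos_of_pos ht γ
      have hsplit : ‖z‖ ^ (γ + 2) = ‖z‖ ^ γ * ‖z‖ ^ (2 : ℕ) := by
        rw [Real.rpow_add ht, show (2 : ℝ) = ((2 : ℕ) : ℝ) by norm_num, Real.rpow_natCast]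
      rw [hsplit] at hzc
      have hgz := heq z ⟨hzb, hz0'⟩
      have hup := upos z ⟨hzb, hz0'⟩
      have hinv : ‖z‖ * ‖z‖⁻¹ = 1 := mul_inv_cancel₀ ht.ne'
      have hinv2 : (‖z‖ * ‖z‖⁻¹) ^ 2 = 1 := by rw [hinv]; norm_num
      have e0 : M * (‖z‖ ^ γ * ‖z‖ ^ 2) * (‖z‖⁻¹) ^ 2 = M * ‖z‖ ^ γ := by
        linear_combination M * ‖z‖ ^ γ * hinv2
      have e1 : ‖g z‖ ^ 2 ≤ M * ‖z‖ ^ γ := by nlinarith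
      have e2 : M * ‖z‖ ^ γ < c ^ 2 * (‖z‖⁻¹) ^ 2 := by
        have h := mul_lt_mul_of_pos_right hzc (pow_pos (inv_pos.2 ht) 2)
        rwa [e0] at h
      have hsq : ‖g z‖ ^ 2 ≤ (c * ‖z⁻¹‖) ^ 2 := by
        rw [norm_inv, mul_pow]
        exact le_of_lt (lt_of_le_of_lt e1 e2)
      have h1 : 0 ≤ ‖g z‖ := norm_nonneg _
      have h2 : 0 ≤ c * ‖z⁻¹‖ := by positivity
      exact (pow_le_pow_iff_left₀ h1 h2 two_ne_zero).mp hsq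
    have hconst : (fun _ : ℂ => g 0) =o[𝓝[≠] (0 : ℂ)] fun z => z⁻¹ := by
      refine isLittleO_const_left.2 (Or.inr ?_)
      have : Tendsto (fun z : ℂ => ‖z‖) (𝓝[≠] 0) (𝓝[>] 0) := by
        apply tendsto_nhdsWithin_of_tendsto_nhds_of_eventually_within
        · simpa using (continuous_norm.tendsto (0 : ℂ)).mono_left nhdsWithin_le_nhds
        · filter_upwards [self_mem_nhdsWithin] with z hz
          exact norm_pos_iff.2 hz
      simpa [Function.comp_def, norm_inv] using tendsto_inv_nhdsGT_zero.comp this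
    exact hog.sub hconst
  -- the extension
  set G : ℂ → ℂ := Function.update g 0 (limUnder (𝓝[≠] (0 : ℂ)) g) with hGdef
  have hG : DifferentiableOn ℂ G (ball (0 : ℂ) 1) := by
    simpa using Complex.differentiableOn_update_limUnder_of_isLittleO hs hg (by simpa using ho)
  have hEq : EqOn G g (ball (0 : ℂ) 1 \ {0}) := fun z hz =>
    Function.update_of_ne hz.2 _ _
  -- γ ≥ 0
  have hγ0 : 0 ≤ γ := by
    by_contra hneg
    push_neg at hneg
    haveI : (𝓝[ball (0 : ℂ) 1 \ {0}] (0 : ℂ)).NeBot := by rw [hl]; infer_instance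
    have htu : Tendsto u (𝓝[ball (0 : ℂ) 1 \ {0}] 0) (𝓝 (u 0)) :=
      (hu 0 (mem_ball_self one_pos)).mono diff_subset
    have htG : Tendsto (fun z => ‖G z‖ ^ 2 * ‖z‖ ^ (-γ))
        (𝓝[ball (0 : ℂ) 1 \ {0}] 0) (𝓝 (‖G 0‖ ^ 2 * 0)) := by
      have h1 : Tendsto (fun z => ‖G z‖ ^ 2) (𝓝[ball (0 : ℂ) 1 \ {0}] 0) (𝓝 (‖G 0‖ ^ 2)) := by
        have hcw : ContinuousWithinAt G (ball (0 : ℂ) 1 \ {0}) 0 :=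
          (hG.continuousOn 0 (mem_ball_self one_pos)).mono
            (diff_subset : ball (0 : ℂ) 1 \ {0} ⊆ ball (0 : ℂ) 1)
        exact hcw.norm.pow 2
      have h2 : Tendsto (fun z : ℂ => ‖z‖ ^ (-γ)) (𝓝[ball (0 : ℂ) 1 \ {0}] 0) (𝓝 0) := by
        have hnt : Tendsto (fun z : ℂ => ‖z‖) (𝓝 0) (𝓝 0) := by
          simpa using continuous_norm.tendsto (0 : ℂ)
        have h := (Real.continuousAt_rpow_const 0 (-γ) (Or.inr (by linarith))).tendsto.comp hnt
        have h' : Tendsto (fun z : ℂ => ‖z‖ ^ (-γ)) (𝓝 0) (𝓝 0) := by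
          simpa [Function.comp_def, Real.zero_rpow (by linarith : -γ ≠ 0)] using h
        exact h'.mono_left nhdsWithin_le_nhds
      exact h1.mul h2
    have heq2 : Tendsto u (𝓝[ball (0 : ℂ) 1 \ {0}] 0) (𝓝 (‖G 0‖ ^ 2 * 0)) := by
      refine htG.congr' ?_
      filter_upwards [self_mem_nhdsWithin] with z hz
      have ht : (0 : ℝ) < ‖z‖ := norm_pos_iff.2 hz.2
      rw [hEq hz, heq z hz, mul_comm (‖z‖ ^ γ) (u z), mul_assoc,
        ← Real.rpow_add ht, add_neg_cancel, Real.rpow_zero, mul_one]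
    have := tendsto_nhds_unique heq2 htu
    rw [mul_zero] at this
    exact u0pos.ne' this.symm
  exact ⟨hγ0, G, hG, hEq⟩
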